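/- Let G be a finite group of order n ≥ 3. Then the following are equivalent: (a) sdim(𝒫_R(G)) = n − 2; (b) the reduced graph ℛ_{𝒫_R(G)} is a star; (c) G is isomorphic to ℤ_4, to Q_8, or to a 𝒫-group. -/

import Mathlib

/-- The closed neighborhood of a vertex `x` in a simple graph. -/
def closedNbhd {V : Type*} (Γ : SimpleGraph V) (x : V) : Set V :=
  insert x (Γ.neighborSet x)

/-- `z` strongly resolves `x` and `y` if some shortest path from `z` to `x`
contains `y`, or some shortest path from `z` to `y` contains `x`. -/
def StronglyResolves {V : Type*} (Γ : SimpleGraph V) (z x y : V) : Prop :=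
  (∃ w : Γ.Walk z x, w.IsPath ∧ w.length = Γ.dist z x ∧ y ∈ w.support) ∨
  (∃ w : Γ.Walk z y, w.IsPath ∧ w.length = Γ.dist z y ∧ x ∈ w.support)

/-- `S` is a strong resolving set if every pair of distinct vertices is
strongly resolved by some vertex of `S`. -/
def IsStrongResolvingSet {V : Type*} (Γ : SimpleGraph V) (S : Set V) : Prop :=
  ∀ x y : V, x ≠ y → ∃ z ∈ S, StronglyResolves Γ z x y

/-- The strong metric dimension: the minimum size of a strong resolving set. -/
noncomputable def sdim {V : Type*} [Fintype V] (Γ : SimpleGraph V) : ℕ :=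
  sInf {k | ∃ S : Finset V, S.card = k ∧ IsStrongResolvingSet Γ ↑S}

/-- The equivalence relation `x ≈ y` iff `N[x] = N[y]`. -/
def nbhdSetoid {V : Type*} (Γ : SimpleGraph V) : Setoid V :=
  ⟨fun x y => closedNbhd Γ x = closedNbhd Γ y,
   ⟨fun _ => rfl, Eq.symm, Eq.trans⟩⟩

/-- The reduced graph `ℛ_Γ`: vertices are the `≈`-classes, two distinct classes
being adjacent iff some (equivalently, any) pair of their members is adjacent in `Γ`. -/
def reducedGraph {V : Type*} (Γ : SimpleGraph V) :
    SimpleGraph (Quotient (nbhdSetoid Γ)) where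
  Adj a b := a ≠ b ∧ ∃ x y : V,
    Quotient.mk (nbhdSetoid Γ) x = a ∧ Quotient.mk (nbhdSetoid Γ) y = b ∧ Γ.Adj x y
  symm := ⟨by rintro a b ⟨h, x, y, hx, hy, hadj⟩; exact ⟨h.symm, y, x, hy, hx, hadj.symm⟩⟩
  loopless := ⟨by rintro a ⟨h, -⟩; exact h rfl⟩

/-- The order supergraph `𝒮(G)`: distinct `x, y` are adjacent iff
`o(x) ∣ o(y)` or `o(y) ∣ o(x)`. -/
def orderSupergraph (G : Type*) [Group G] : SimpleGraph G where
  Adj x y := x ≠ y ∧ (orderOf x ∣ orderOf y ∨ orderOf y ∣ orderOf x)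
  symm := ⟨by rintro x y ⟨h, h2⟩; exact ⟨h.symm, h2.symm⟩⟩
  loopless := ⟨by rintro x ⟨h, -⟩; exact h rfl⟩

/-- The enhanced power graph `𝒫_E(G)`: distinct `x, y` are adjacent iff
`⟨x, y⟩` is cyclic. -/
def enhancedPowerGraph (G : Type*) [Group G] : SimpleGraph G where
  Adj x y := x ≠ y ∧ IsCyclic (Subgroup.closure ({x, y} : Set G))
  symm := ⟨by rintro x y ⟨h, h2⟩; rw [Set.pair_comm] at h2; exact ⟨h.symm, h2⟩⟩
  loopless := ⟨by rintro x ⟨h, -⟩; exact h rfl⟩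

/-- The reduced power graph `𝒫_R(G)`: distinct `x, y` are adjacent iff
`⟨x⟩ ⊂ ⟨y⟩` or `⟨y⟩ ⊂ ⟨x⟩`. -/
def reducedPowerGraph (G : Type*) [Group G] : SimpleGraph G where
  Adj x y := Subgroup.zpowers x < Subgroup.zpowers y ∨ Subgroup.zpowers y < Subgroup.zpowers x
  symm := ⟨by rintro x y h; exact h.symm⟩
  loopless := ⟨by rintro x h; rcases h with h | h <;> exact lt_irrefl _ h⟩

/-- `Ω n`: the number of prime factors of `n` counted with multiplicity. -/
def bigOmega (n : ℕ) : ℕ := n.primeFactorsList.length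

/-- A maximal cyclic subgroup: a cyclic subgroup not properly contained in any
cyclic subgroup. -/
def IsMaxCyclic {G : Type*} [Group G] (M : Subgroup G) : Prop :=
  IsCyclic M ∧ ∀ N : Subgroup G, IsCyclic N → M ≤ N → M = N

/-- `ℳ_g`: the set of maximal cyclic subgroups containing `g`. -/
def maxCyclicOn {G : Type*} [Group G] (g : G) : Set (Subgroup G) :=
  {M | IsMaxCyclic M ∧ g ∈ M}

/-- A star: one center vertex adjacent to all other vertices, and every edge
contains the center (equivalently, a tree with one vertex of degree `n - 1`
and all other vertices of degree `1`). -/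
def IsStar {V : Type*} (Γ : SimpleGraph V) : Prop :=
  ∃ c : V, (∀ v : V, v ≠ c → Γ.Adj c v) ∧ ∀ u v : V, Γ.Adj u v → u = c ∨ v = c


/-!
`𝒫_R(G)` has the universal vertex `1`, so its diameter is at most two. In such a graph a
vertex outside `{x, y}` strongly resolves `x, y` only if `x, y` are adjacent and not twins,
and then any vertex of `N[y] \ N[x]` resolves them along a geodesic through `y`. Hence the
complements of strong resolving sets are exactly the sets mapped injectively onto cliques of
the reduced graph `ℛ`, and `sdim = n - ω(ℛ)`. Since `ℛ` has a universal vertex and, for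
`n ≥ 3`, an edge, `sdim = n - 2`, "`ℛ` is a star" and "`ℛ` is triangle-free" are equivalent.

If `⟨y⟩ < ⟨z⟩` with `y ≠ 1` and `z² ≠ 1`, triangle-freeness forces `y` to be universal,
hence an involution. So an element of non-prime order yields an involution `u` which is the
only element of prime order and the square of every element outside `{1, u}`. In such a group
every element outside `⟨a⟩`, `a` of order `4`, inverts `a` by conjugation, so `⟨a⟩` has index
at most two and `G` is `ℤ₄` or `Q₈`. Conversely, in `ℤ₄`, `Q₈` and `𝒫`-groups every edge of
`𝒫_R(G)` meets a universal vertex.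
-/

open Subgroup SimpleGraph

section ReducedGraph

variable {V : Type*} {Γ : SimpleGraph V}

theorem mem_closedNbhd {x y : V} : y ∈ closedNbhd Γ x ↔ y = x ∨ Γ.Adj x y := Iff.rfl

theorem reducedGraph_adj_mk {x y : V} :
    (reducedGraph Γ).Adj (Quotient.mk _ x) (Quotient.mk _ y) ↔
      Γ.Adj x y ∧ closedNbhd Γ x ≠ closedNbhd Γ y := by
  refine ⟨fun ⟨hne, x', y', hx, hy, hadj⟩ => ?_, fun ⟨hadj, hN⟩ =>
    ⟨fun h => hN (Quotient.exact h), x, y, rfl, rfl, hadj⟩⟩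
  have hN : closedNbhd Γ x ≠ closedNbhd Γ y := fun h => hne (Quotient.sound h)
  have hx' : closedNbhd Γ x' = closedNbhd Γ x := Quotient.exact hx
  have hy' : closedNbhd Γ y' = closedNbhd Γ y := Quotient.exact hy
  have hxy' : Γ.Adj x y' := by
    rcases mem_closedNbhd.mp (hx' ▸ mem_closedNbhd.mpr (Or.inr hadj)) with rfl | h
    · exact (hN hy').elim
    · exact h
  rcases mem_closedNbhd.mp (hy' ▸ mem_closedNbhd.mpr (Or.inr hxy'.symm)) with rfl | h
  · exact absurd rfl hN
  · exact ⟨h.symm, hN⟩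

theorem reducedGraph_adj_of_closedNbhd_eq_univ {c : V} (hc : closedNbhd Γ c = Set.univ)
    (v : Quotient (nbhdSetoid Γ)) (hv : v ≠ Quotient.mk _ c) :
    (reducedGraph Γ).Adj (Quotient.mk _ c) v := by
  induction v using Quotient.inductionOn with
  | h x =>
    refine reducedGraph_adj_mk.mpr ⟨?_, fun h => hv (Quotient.sound h.symm)⟩
    exact (mem_closedNbhd.mp (hc ▸ Set.mem_univ x)).resolve_left fun h => hv (h ▸ rfl)

theorem isStar_reducedGraph {c : V} (hc : closedNbhd Γ c = Set.univ)
    (h : ∀ x y, Γ.Adj x y → closedNbhd Γ x = Set.univ ∨ closedNbhd Γ y = Set.univ) :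
    IsStar (reducedGraph Γ) := by
  refine ⟨Quotient.mk _ c, reducedGraph_adj_of_closedNbhd_eq_univ hc, ?_⟩
  rintro _ _ ⟨-, x, y, rfl, rfl, hxy⟩
  exact (h x y hxy).imp (fun hx => Quotient.sound (hx.trans hc.symm))
    (fun hy => Quotient.sound (hy.trans hc.symm))

end ReducedGraph

section Cliques

variable {V W : Type*} {R : SimpleGraph W}

theorem isStar_iff_cliqueFree_three {c : W}
    (hc : ∀ v, v ≠ c → R.Adj c v) : IsStar R ↔ R.CliqueFree 3 := by
  classical
  constructor
  · rintro ⟨d, -, hd⟩ s hs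
    obtain ⟨x, y, z, hxy, hxz, hyz, -⟩ := is3Clique_iff.mp hs
    rcases hd x y hxy with rfl | rfl
    · rcases hd y z hyz with rfl | rfl
      · exact hxy.ne rfl
      · exact hxz.ne rfl
    · rcases hd x z hxz with rfl | rfl
      · exact hxy.ne rfl
      · exact hyz.ne rfl
  · intro h
    refine ⟨c, hc, fun u v huv => ?_⟩
    by_contra! hne
    exact h {c, u, v} (is3Clique_iff.mpr ⟨c, u, v, hc u hne.1, hc v hne.2, huv, rfl⟩)

theorem cliqueFree_iff_cliqueNum_lt [Finite W] {n : ℕ} :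
    R.CliqueFree n ↔ R.cliqueNum < n := by
  refine ⟨fun h => ?_, fun h s hs => ?_⟩
  · obtain ⟨s, hs⟩ := R.exists_isNClique_cliqueNum
    by_contra! hn
    exact h.mono hn s hs
  · have := IsClique.card_le_cliqueNum (tc := hs.isClique)
    rw [hs.card_eq] at this
    omega

theorem two_le_cliqueNum [Finite W] {a b : W} (hab : R.Adj a b) :
    2 ≤ R.cliqueNum := by
  classical
  have hclique : R.IsClique (({a, b} : Finset W) : Set W) := by
    rw [Finset.coe_pair]
    exact isClique_pair.mpr fun _ => hab
  exact Finset.card_pair hab.ne ▸ IsClique.card_le_cliqueNum (tc := hclique)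



theorem card_le_cliqueNum_of_pairwise [Finite W] (f : V → W) {T : Finset V}
    (hT : (T : Set V).Pairwise fun x y => R.Adj (f x) (f y)) : T.card ≤ R.cliqueNum := by
  classical
  have hinj : Set.InjOn f T := fun x hx y hy hxy =>
    by_contra fun hne => (hT hx hy hne).ne hxy
  have hclique : R.IsClique (T.image f : Set W) := by
    rw [Finset.coe_image]
    exact hinj.pairwise_image.mpr hT
  rw [← Finset.card_image_of_injOn hinj]
  exact IsClique.card_le_cliqueNum (tc := hclique)

theorem exists_pairwise_card_eq_cliqueNum {f : V → W} (hf : f.Surjective) :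
    ∃ T : Finset V, T.card = R.cliqueNum ∧
      (T : Set V).Pairwise fun x y => R.Adj (f x) (f y) := by
  classical
  obtain ⟨s, hs⟩ := R.exists_isNClique_cliqueNum
  have hg := Function.surjInv_eq hf
  refine ⟨s.image (Function.surjInv hf), ?_, ?_⟩
  · rw [Finset.card_image_of_injective _ (Function.injective_surjInv hf), hs.card_eq]
  · rw [Finset.coe_image]
    rintro _ ⟨a, ha, rfl⟩ _ ⟨b, hb, rfl⟩ hab
    rw [hg, hg]
    exact hs.isClique ha hb fun h => hab (h ▸ rfl)

end Cliques

section StrongResolving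

variable {V : Type*} {Γ : SimpleGraph V}

theorem ediam_le_two_of_forall_adj {c : V}
    (hc : ∀ v, v ≠ c → Γ.Adj c v) : Γ.ediam ≤ 2 := by
  have h1 : ∀ v, Γ.edist c v ≤ 1 := fun v =>
    edist_le_one_iff_adj_or_eq.mpr ((eq_or_ne v c).symm.imp (hc v) Eq.symm)
  refine ediam_le_of_edist_le fun x y => ?_
  calc Γ.edist x y ≤ Γ.edist x c + Γ.edist c y := Γ.edist_triangle
    _ ≤ 1 + 1 := add_le_add (edist_comm ▸ h1 x) (h1 y)
    _ = 2 := one_add_one_eq_two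

theorem reachable_of_ediam_le_two (hΓ : Γ.ediam ≤ 2) (x y : V) : Γ.Reachable x y :=
  reachable_of_edist_ne_top ((edist_le_ediam.trans hΓ).trans_lt (by decide)).ne

theorem dist_le_two_of_ediam_le_two (hΓ : Γ.ediam ≤ 2) (x y : V) : Γ.dist x y ≤ 2 := by
  have h := (reachable_of_ediam_le_two hΓ x y).coe_dist_eq_edist ▸ edist_le_ediam.trans hΓ
  exact_mod_cast h

theorem StronglyResolves.symm {z x y : V} (h : StronglyResolves Γ z x y) :
    StronglyResolves Γ z y x :=
  Or.symm h

theorem stronglyResolves_self {x y : V} (h : Γ.Reachable x y) : StronglyResolves Γ x x y :=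
  let ⟨w, hw, hlen⟩ := h.exists_path_of_dist
  Or.inr ⟨w, hw, hlen, w.start_mem_support⟩

theorem stronglyResolves_of_adj {x y z : V} (hyx : Γ.Adj y x) (hzy : Γ.Adj z y)
    (hzx : ¬ Γ.Adj z x) (hne : z ≠ x) : StronglyResolves Γ z x y := by
  let w : Γ.Walk z x := .cons hzy (.cons hyx .nil)
  have hdist : Γ.dist z x = 2 := by
    have h0 := w.reachable.pos_dist_of_ne hne
    have h1 : Γ.dist z x ≠ 1 := fun h => hzx (dist_eq_one_iff_adj.mp h)
    have h2 : Γ.dist z x ≤ 2 := dist_le w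
    omega
  refine Or.inl ⟨w, ?_, hdist.symm, by simp [w]⟩
  simp [w, hzy.ne, hyx.ne, hne]

theorem SimpleGraph.Walk.dist_add_dist_le_length {x y z : V} (w : Γ.Walk z x)
    (hy : y ∈ w.support) :
    Γ.dist z y + Γ.dist y x ≤ w.length := by
  classical
  have := congrArg Walk.length (w.take_spec hy)
  rw [Walk.length_append] at this
  have := dist_le (w.takeUntil y hy)
  have := dist_le (w.dropUntil y hy)
  omega

theorem SimpleGraph.Walk.adj_and_closedNbhd_ne_of_mem_support {x y z : V} (w : Γ.Walk z x)
    (hw : w.length = Γ.dist z x) (h2 : Γ.dist z x ≤ 2) (hy : y ∈ w.support)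
    (hzy : z ≠ y) (hyx : y ≠ x) :
    Γ.Adj y x ∧ closedNbhd Γ y ≠ closedNbhd Γ x := by
  classical
  have hsum := w.dist_add_dist_le_length hy
  have h1 := (w.takeUntil y hy).reachable.pos_dist_of_ne hzy
  have h2' := (w.dropUntil y hy).reachable.pos_dist_of_ne hyx
  have hzy1 : Γ.Adj z y := dist_eq_one_iff_adj.mp (by omega)
  have hzx : Γ.dist z x = 2 := by omega
  refine ⟨dist_eq_one_iff_adj.mp (by omega), fun hN => ?_⟩
  rcases mem_closedNbhd.mp (hN ▸ mem_closedNbhd.mpr (Or.inr hzy1.symm)) with rfl | h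
  · rw [dist_self] at hzx
    omega
  · rw [dist_eq_one_iff_adj.mpr h.symm] at hzx
    omega

theorem StronglyResolves.adj_and_closedNbhd_ne (hΓ : Γ.ediam ≤ 2) {x y z : V}
    (h : StronglyResolves Γ z x y) (hxy : x ≠ y) (hzx : z ≠ x) (hzy : z ≠ y) :
    Γ.Adj x y ∧ closedNbhd Γ x ≠ closedNbhd Γ y := by
  rcases h with ⟨w, -, hw, hy⟩ | ⟨w, -, hw, hx⟩
  · obtain ⟨hadj, hN⟩ := w.adj_and_closedNbhd_ne_of_mem_support hw
      (dist_le_two_of_ediam_le_two hΓ z x) hy hzy hxy.symm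
    exact ⟨hadj.symm, hN.symm⟩
  · exact w.adj_and_closedNbhd_ne_of_mem_support hw (dist_le_two_of_ediam_le_two hΓ z y) hx hzx
      hxy

theorem isStrongResolvingSet_iff (hΓ : Γ.ediam ≤ 2) {S : Set V} :
    IsStrongResolvingSet Γ S ↔
      Sᶜ.Pairwise fun x y => (reducedGraph Γ).Adj (Quotient.mk _ x) (Quotient.mk _ y) := by
  refine ⟨fun h x hx y hy hxy => ?_, fun h x y hxy => ?_⟩
  · obtain ⟨z, hz, hres⟩ := h x y hxy
    exact reducedGraph_adj_mk.mpr (hres.adj_and_closedNbhd_ne hΓ hxy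
      (fun h => hx (h ▸ hz)) (fun h => hy (h ▸ hz)))
  by_cases hx : x ∈ S
  · exact ⟨x, hx, stronglyResolves_self (reachable_of_ediam_le_two hΓ x y)⟩
  by_cases hy : y ∈ S
  · exact ⟨y, hy, (stronglyResolves_self (reachable_of_ediam_le_two hΓ y x)).symm⟩
  -- a vertex `z ∈ N[y] \ N[x]` lies in `S` and resolves `x, y` along the geodesic `z - y - x`
  have key : ∀ {x y}, x ∉ S → y ∉ S → Γ.Adj x y → ∀ z, z ∈ closedNbhd Γ y →
      z ∉ closedNbhd Γ x → ∃ z ∈ S, StronglyResolves Γ z x y := by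
    intro x y hx hy hxy z hzy hzx
    have hzx' : z ≠ x := fun h => hzx (mem_closedNbhd.mpr (Or.inl h))
    have hadj : ¬ Γ.Adj x z := fun h => hzx (mem_closedNbhd.mpr (Or.inr h))
    have hzy' : Γ.Adj y z := (mem_closedNbhd.mp hzy).resolve_left
      fun h => hzx (mem_closedNbhd.mpr (Or.inr (h ▸ hxy)))
    refine ⟨z, by_contra fun hz => hadj (reducedGraph_adj_mk.mp (h hx hz hzx'.symm)).1,
      stronglyResolves_of_adj hxy.symm hzy'.symm (fun h => hadj h.symm) hzx'⟩
  obtain ⟨hadj, hN⟩ := reducedGraph_adj_mk.mp (h hx hy hxy)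
  obtain ⟨z, hz⟩ : ∃ z, ¬ (z ∈ closedNbhd Γ x ↔ z ∈ closedNbhd Γ y) := by
    by_contra! hall
    exact hN (Set.ext hall)
  by_cases hzx : z ∈ closedNbhd Γ x
  · obtain ⟨z, hzS, hres⟩ := key hy hx hadj.symm z hzx fun hzy => hz (iff_of_true hzx hzy)
    exact ⟨z, hzS, hres.symm⟩
  · exact key hx hy hadj z ((not_iff.mp hz).mp hzx) hzx

end StrongResolving

section Sdim

variable {V : Type*} [Fintype V] {Γ : SimpleGraph V}

theorem sdim_eq_card_sub_cliqueNum (hΓ : Γ.ediam ≤ 2) :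
    sdim Γ = Fintype.card V - (reducedGraph Γ).cliqueNum := by
  classical
  have hres : ∀ S : Finset V, IsStrongResolvingSet Γ S ↔ ((Sᶜ : Finset V) : Set V).Pairwise
      fun x y => (reducedGraph Γ).Adj (Quotient.mk _ x) (Quotient.mk _ y) := fun S => by
    rw [isStrongResolvingSet_iff hΓ, Finset.coe_compl]
  obtain ⟨T, hT, hTclique⟩ :=
    exists_pairwise_card_eq_cliqueNum (R := reducedGraph Γ) Quotient.mk_surjective
  have hmem : Fintype.card V - (reducedGraph Γ).cliqueNum ∈
      {k | ∃ S : Finset V, S.card = k ∧ IsStrongResolvingSet Γ S} :=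
    ⟨Tᶜ, by rw [Finset.card_compl, hT], (hres _).mpr (by rwa [compl_compl])⟩
  refine le_antisymm (Nat.sInf_le hmem) (le_csInf ⟨_, hmem⟩ ?_)
  rintro _ ⟨S, rfl, hS⟩
  have := card_le_cliqueNum_of_pairwise _ ((hres S).mp hS)
  rw [Finset.card_compl] at this
  have := S.card_le_univ
  omega

theorem cliqueNum_reducedGraph_le_card : (reducedGraph Γ).cliqueNum ≤ Fintype.card V := by
  obtain ⟨T, hT, -⟩ :=
    exists_pairwise_card_eq_cliqueNum (R := reducedGraph Γ) Quotient.mk_surjective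
  exact hT ▸ T.card_le_univ

theorem sdim_eq_card_sub_two_iff (hΓ : Γ.ediam ≤ 2) {a b : Quotient (nbhdSetoid Γ)}
    (hab : (reducedGraph Γ).Adj a b) :
    sdim Γ = Fintype.card V - 2 ↔ (reducedGraph Γ).CliqueFree 3 := by
  rw [sdim_eq_card_sub_cliqueNum hΓ, cliqueFree_iff_cliqueNum_lt]
  have := two_le_cliqueNum hab
  have := cliqueNum_reducedGraph_le_card (Γ := Γ)
  omega

end Sdim

section GroupTheory

variable {G H : Type*} [Group G] [Group H]

theorem ne_one_of_orderOf_prime {x : G} (hx : (orderOf x).Prime) : x ≠ 1 := by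
  rintro rfl
  exact Nat.not_prime_one (orderOf_one (G := G) ▸ hx)

theorem mul_mul_inv_eq_inv_of_sq_eq_sq {a x : G} (hx : x ^ 2 = a ^ 2) (hxa : (x * a) ^ 2 = a ^ 2) :
    x * a * x⁻¹ = a⁻¹ := by
  have hxax : x * a * x = a := mul_right_cancel (b := a) (by simpa [sq, mul_assoc] using hxa)
  calc x * a * x⁻¹ = x * a * x * (x ^ 2)⁻¹ := by group
    _ = a⁻¹ := by rw [hxax, hx]; group

theorem zpowers_lt_zpowers_iff [Finite G] {x y : G} :
    zpowers x < zpowers y ↔ x ∈ zpowers y ∧ orderOf x < orderOf y := by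
  rw [← zpowers_le, ← Nat.card_zpowers, ← Nat.card_zpowers]
  refine ⟨fun h => ⟨h.le, lt_of_le_of_ne (card_le_of_le h.le)
    fun heq => h.ne (eq_of_le_of_card_ge h.le heq.ge)⟩, fun ⟨hle, hlt⟩ => ?_⟩
  exact lt_of_le_of_ne hle fun h => hlt.ne (by rw [h])

theorem eq_one_of_zpowers_lt_of_prime [Finite G] {x y : G} (hlt : zpowers x < zpowers y)
    (hy : (orderOf y).Prime) : x = 1 := by
  obtain ⟨hx, hxy⟩ := zpowers_lt_zpowers_iff.mp hlt
  rcases hy.eq_one_or_self_of_dvd _ (orderOf_dvd_of_mem_zpowers hx) with h | h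
  · exact orderOf_eq_one_iff.mp h
  · exact absurd h hxy.ne

/-- Equivalently: `u` is the only involution and `g ^ 4 = 1` for every `g`. -/
def IsCommonSquare (u : G) : Prop :=
  orderOf u = 2 ∧ ∀ g : G, g ≠ 1 → g ≠ u → g ^ 2 = u

theorem IsCommonSquare.map {u : G} (h : IsCommonSquare u) (e : G ≃* H) :
    IsCommonSquare (e u) := by
  refine ⟨by rw [MulEquiv.orderOf_eq, h.1], fun g hg1 hgu => ?_⟩
  rw [← e.apply_symm_apply g, ← map_pow, h.2 _ ?_ ?_] <;> intro hg
  · exact hg1 (by rw [← e.apply_symm_apply g, hg, map_one])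
  · exact hgu (by rw [← e.apply_symm_apply g, hg])

theorem isCommonSquare_zmod_four : IsCommonSquare (Multiplicative.ofAdd (2 : ZMod 4)) :=
  ⟨orderOf_eq_prime (by decide) (by decide), by decide⟩

theorem isCommonSquare_quaternionGroup_two :
    IsCommonSquare (QuaternionGroup.a 2 : QuaternionGroup 2) :=
  ⟨orderOf_eq_prime (by decide) (by decide), by decide⟩

theorem IsCommonSquare.ne_one {u : G} (h : IsCommonSquare u) : u ≠ 1 :=
  ne_one_of_orderOf_prime (h.1 ▸ Nat.prime_two)

theorem IsCommonSquare.orderOf_eq_four {u g : G} (h : IsCommonSquare u) (hg1 : g ≠ 1)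
    (hgu : g ≠ u) : orderOf g = 4 := by
  have hg := h.2 g hg1 hgu
  exact orderOf_eq_prime_pow (p := 2) (n := 1) (by rw [pow_one, hg]; exact h.ne_one)
    (by rw [show 2 ^ (1 + 1) = 2 * 2 from rfl, pow_mul, hg, ← h.1, pow_orderOf_eq_one])

end GroupTheory

section Classification

variable {G : Type*} [Group G] [Finite G]

theorem nonempty_mulEquiv_quaternionGroup_two (hcard : Nat.card G = 8) {a j : G}
    (ha : orderOf a = 4) (hj : j ∉ zpowers a) (hja : j ^ 2 = a ^ 2)
    (hconj : j⁻¹ * a * j = a⁻¹) : Nonempty (G ≃* QuaternionGroup 2) := by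
  let f : ZMod 4 → G := fun k => a ^ k.val
  have hf_add : ∀ k l, f (k + l) = f k * f l := fun k l => by
    show a ^ (k + l).val = a ^ k.val * a ^ l.val
    rw [← pow_add, ← pow_mod_orderOf a (k.val + l.val), ha, ZMod.val_add]
  have hf_sub : ∀ k l, f (k - l) = (f l)⁻¹ * f k := fun k l => by
    rw [eq_inv_mul_iff_mul_eq, ← hf_add, add_sub_cancel]
  have hf_j : ∀ k, f k * j = j * (f k)⁻¹ := fun k => by
    have hpow : (j⁻¹ * a * j) ^ k.val = j⁻¹ * f k * j := by
      simpa using conj_pow (a := j⁻¹) (b := a) (i := k.val)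
    calc f k * j = j * (j⁻¹ * f k * j) := by group
      _ = j * (f k)⁻¹ := by rw [← hpow, hconj, inv_pow]
  let φ : QuaternionGroup 2 → G
    | .a k => f k
    | .xa k => j * f k
  have hφ : ∀ x y, φ (x * y) = φ x * φ y := by
    rintro (k | k) (l | l)
    · exact hf_add k l
    · show j * f (l - k) = f k * (j * f l)
      rw [hf_sub, ← mul_assoc (f k), hf_j, mul_assoc]
    · show j * f (k + l) = j * f k * f l
      rw [hf_add, mul_assoc]
    · show f ((2 : ℕ) + l - k) = j * f k * (j * f l)
      have hf2 : f (2 : ℕ) = j * j := by rw [← sq, hja]; rfl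
      rw [add_sub_assoc, hf_add, hf_sub, hf2]
      simp only [mul_assoc]
      rw [← mul_assoc (f k) j, hf_j, mul_assoc]
  let ψ : QuaternionGroup 2 →* G := MonoidHom.mk' φ hφ
  have hinj : Function.Injective ψ := by
    refine (injective_iff_map_eq_one ψ).mpr ?_
    rintro (k | k) h
    · have h4 : 4 ∣ k.val := ha ▸ orderOf_dvd_of_pow_eq_one h
      rw [(ZMod.val_eq_zero k).mp (Nat.eq_zero_of_dvd_of_lt h4 (ZMod.val_lt k))]
      rfl
    · exact absurd (eq_inv_of_mul_eq_one_left h ▸ inv_mem (npow_mem_zpowers a _)) hj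
  have hbij : Function.Bijective ψ := (Nat.bijective_iff_injective_and_card ψ).mpr
    ⟨hinj, by rw [hcard, Nat.card_eq_fintype_card, QuaternionGroup.card]⟩
  exact ⟨(MulEquiv.ofBijective ψ hbij).symm⟩

theorem IsCommonSquare.nonempty_mulEquiv {u a : G} (h : IsCommonSquare u) (ha1 : a ≠ 1)
    (hau : a ≠ u) :
    Nonempty (G ≃* Multiplicative (ZMod 4)) ∨ Nonempty (G ≃* QuaternionGroup 2) := by
  have ha2 : a ^ 2 = u := h.2 a ha1 hau
  have ha4 : orderOf a = 4 := h.orderOf_eq_four ha1 hau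
  set A := zpowers a
  have hsqA : ∀ x, x ∉ A → x ^ 2 = a ^ 2 := fun x hx =>
    ha2 ▸ h.2 x (fun h1 => hx (h1 ▸ one_mem A))
      fun hu => hx (hu ▸ ha2 ▸ npow_mem_zpowers a 2)
  have hconj : ∀ x, x ∉ A → x * a * x⁻¹ = a⁻¹ := fun x hx =>
    mul_mul_inv_eq_inv_of_sq_eq_sq (hsqA x hx)
      (hsqA _ fun h' => hx ((mul_mem_cancel_right (mem_zpowers a)).mp h'))
  -- two elements outside `A` both invert `a`, so their product centralizes it
  have hmul : ∀ x y, x ∉ A → y ∉ A → x * y ∈ A := by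
    intro x y hx hy
    by_contra hxy
    have hinv : a⁻¹ = a :=
      calc a⁻¹ = x * y * a * (x * y)⁻¹ := (hconj _ hxy).symm
        _ = x * (y * a * y⁻¹) * x⁻¹ := by group
        _ = (x * a * x⁻¹)⁻¹ := by rw [hconj y hy]; group
        _ = a := by rw [hconj x hx, inv_inv]
    exact h.ne_one (ha2 ▸ sq a ▸ mul_eq_one_iff_eq_inv.mpr hinv.symm)
  by_cases hA : ∀ g, g ∈ A
  · have hcard : Nat.card G = 4 := by
      rw [← ha4, ← Nat.card_zpowers, (eq_top_iff' (zpowers a)).mpr hA, card_top]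
    have := isCyclic_of_orderOf_eq_card a (ha4.trans hcard.symm)
    exact Or.inl ⟨mulEquivOfCyclicCardEq (by rw [hcard, Nat.card_eq_fintype_card]; rfl)⟩
  · obtain ⟨j, hj⟩ := not_forall.mp hA
    have hidx : A.index = 2 := index_eq_two_iff_exists_notMem_and.mpr
      ⟨j, hj, fun b => (em (b ∈ A)).elim Or.inr fun hb => Or.inl (hmul b j hb hj)⟩
    have hcard : Nat.card G = 8 := by rw [← A.card_mul_index, hidx, Nat.card_zpowers, ha4]
    refine Or.inr (nonempty_mulEquiv_quaternionGroup_two hcard ha4 hj (hsqA j hj) ?_)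
    simpa using hconj j⁻¹ (inv_mem_iff.not.mpr hj)

end Classification

section PowerGraph

variable {G : Type*} [Group G]

theorem reducedPowerGraph_adj_one {x : G} (hx : x ≠ 1) : (reducedPowerGraph G).Adj 1 x :=
  Or.inl (by rwa [zpowers_one_eq_bot, bot_lt_iff_ne_bot, Ne, zpowers_eq_bot])

theorem closedNbhd_reducedPowerGraph_one : closedNbhd (reducedPowerGraph G) 1 = Set.univ :=
  Set.eq_univ_of_forall fun x => (eq_or_ne x 1).imp id reducedPowerGraph_adj_one

theorem sq_eq_one_of_inv_mem_closedNbhd {g : G}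
    (h : g⁻¹ ∈ closedNbhd (reducedPowerGraph G) g) : g ^ 2 = 1 := by
  rcases h with h | h | h
  · rw [sq]
    nth_rw 2 [← h]
    exact mul_inv_cancel g
  all_goals rw [zpowers_inv] at h; exact absurd h (lt_irrefl _)

theorem sq_eq_one_of_closedNbhd_eq_univ {g : G}
    (h : closedNbhd (reducedPowerGraph G) g = Set.univ) : g ^ 2 = 1 :=
  sq_eq_one_of_inv_mem_closedNbhd (h ▸ Set.mem_univ _)

theorem exists_closedNbhd_reducedPowerGraph_ne_univ [Fintype G] (h3 : 3 ≤ Fintype.card G) :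
    ∃ w : G, closedNbhd (reducedPowerGraph G) w ≠ Set.univ := by
  classical
  by_contra! h
  have hcard : 1 < (Finset.univ.erase (1 : G)).card := by
    rw [Finset.card_erase_of_mem (Finset.mem_univ _), Finset.card_univ]
    omega
  obtain ⟨x, hx, y, hy, hxy⟩ := Finset.one_lt_card.mp hcard
  have hprime : ∀ g : G, g ≠ 1 → (orderOf g).Prime := fun g hg => by
    rw [orderOf_eq_prime (sq_eq_one_of_closedNbhd_eq_univ (h g)) hg]
    exact Nat.prime_two
  rcases mem_closedNbhd.mp (h x ▸ Set.mem_univ y) with rfl | hlt | hlt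
  · exact hxy rfl
  · exact Finset.ne_of_mem_erase hx
      (eq_one_of_zpowers_lt_of_prime hlt (hprime y (Finset.ne_of_mem_erase hy)))
  · exact Finset.ne_of_mem_erase hy
      (eq_one_of_zpowers_lt_of_prime hlt (hprime x (Finset.ne_of_mem_erase hx)))

theorem isStar_of_forall_zpowers_lt
    (h : ∀ y z : G, zpowers y < zpowers z → closedNbhd (reducedPowerGraph G) y = Set.univ) :
    IsStar (reducedGraph (reducedPowerGraph G)) :=
  isStar_reducedGraph closedNbhd_reducedPowerGraph_one fun x y hxy =>
    hxy.imp (h x y) (h y x)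

theorem isStar_of_forall_orderOf_prime [Finite G] (hP : ∀ g : G, g ≠ 1 → (orderOf g).Prime) :
    IsStar (reducedGraph (reducedPowerGraph G)) := by
  refine isStar_of_forall_zpowers_lt fun y z hlt => ?_
  have hz : z ≠ 1 := by
    rintro rfl
    exact not_lt_bot (zpowers_one_eq_bot (G := G) ▸ hlt)
  rw [eq_one_of_zpowers_lt_of_prime hlt (hP z hz), closedNbhd_reducedPowerGraph_one]

theorem IsCommonSquare.eq_of_zpowers_lt [Finite G] {u y z : G} (h : IsCommonSquare u)
    (hy : y ≠ 1) (hlt : zpowers y < zpowers z) : y = u := by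
  by_contra hyu
  obtain ⟨hyz, hord⟩ := zpowers_lt_zpowers_iff.mp hlt
  have hz1 : z ≠ 1 := by
    rintro rfl
    exact hy (Subgroup.mem_bot.mp (zpowers_one_eq_bot (G := G) ▸ hyz))
  rw [h.orderOf_eq_four hy hyu] at hord
  rcases eq_or_ne z u with rfl | hzu
  · rw [h.1] at hord
    omega
  · rw [h.orderOf_eq_four hz1 hzu] at hord
    omega

theorem IsCommonSquare.closedNbhd_eq_univ [Finite G] {u : G} (h : IsCommonSquare u) :
    closedNbhd (reducedPowerGraph G) u = Set.univ := by
  refine Set.eq_univ_of_forall fun g => mem_closedNbhd.mpr ?_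
  rcases eq_or_ne g u with hgu | hgu
  · exact Or.inl hgu
  rcases eq_or_ne g 1 with rfl | hg1
  · exact Or.inr (reducedPowerGraph_adj_one h.ne_one).symm
  refine Or.inr (Or.inl (zpowers_lt_zpowers_iff.mpr
    ⟨h.2 g hg1 hgu ▸ npow_mem_zpowers g 2, ?_⟩))
  rw [h.1, h.orderOf_eq_four hg1 hgu]
  omega

theorem IsCommonSquare.isStar [Finite G] {u : G} (h : IsCommonSquare u) :
    IsStar (reducedGraph (reducedPowerGraph G)) := by
  refine isStar_of_forall_zpowers_lt fun y z hlt => ?_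
  rcases eq_or_ne y 1 with rfl | hy
  · exact closedNbhd_reducedPowerGraph_one
  · exact h.eq_of_zpowers_lt hy hlt ▸ h.closedNbhd_eq_univ

theorem eq_of_closedNbhd_eq_univ_of_orderOf_prime [Finite G] {u w : G}
    (hu : closedNbhd (reducedPowerGraph G) u = Set.univ) (hup : (orderOf u).Prime)
    (hw : (orderOf w).Prime) : w = u := by
  rcases mem_closedNbhd.mp (hu ▸ Set.mem_univ w) with h | hlt | hlt
  · exact h
  · exact absurd (eq_one_of_zpowers_lt_of_prime hlt hw) (ne_one_of_orderOf_prime hup)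
  · exact absurd (eq_one_of_zpowers_lt_of_prime hlt hup) (ne_one_of_orderOf_prime hw)

variable (hR : (reducedGraph (reducedPowerGraph G)).CliqueFree 3)
include hR

/-- `1, y, z` form a triangle of `𝒫_R(G)`, and of its three pairs only `1, y` can be twins:
`z` is not universal since `z⁻¹ ∉ N[z]`, and `z⁻¹ ∈ N[y]` separates `y` from `z`. -/
theorem closedNbhd_eq_univ_of_zpowers_lt {y z : G} (hy : y ≠ 1) (hlt : zpowers y < zpowers z)
    (hz : z ^ 2 ≠ 1) : closedNbhd (reducedPowerGraph G) y = Set.univ := by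
  classical
  by_contra hyN
  have hz1 : z ≠ 1 := by
    rintro rfl
    exact hz (one_pow 2)
  have hzN : closedNbhd (reducedPowerGraph G) z ≠ Set.univ :=
    fun h => hz (sq_eq_one_of_closedNbhd_eq_univ h)
  have hzy : z⁻¹ ∈ closedNbhd (reducedPowerGraph G) y :=
    mem_closedNbhd.mpr (Or.inr (Or.inl (by rwa [zpowers_inv])))
  have hyz : closedNbhd (reducedPowerGraph G) y ≠ closedNbhd (reducedPowerGraph G) z :=
    fun h => hz (sq_eq_one_of_inv_mem_closedNbhd (h ▸ hzy))
  apply hR {Quotient.mk _ 1, Quotient.mk _ y, Quotient.mk _ z}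
  rw [is3Clique_iff]
  refine ⟨_, _, _, ?_, ?_, reducedGraph_adj_mk.mpr ⟨Or.inl hlt, hyz⟩, rfl⟩
  · exact reducedGraph_adj_mk.mpr ⟨reducedPowerGraph_adj_one hy,
      by rwa [closedNbhd_reducedPowerGraph_one, ne_comm]⟩
  · exact reducedGraph_adj_mk.mpr ⟨reducedPowerGraph_adj_one hz1,
      by rwa [closedNbhd_reducedPowerGraph_one, ne_comm]⟩

theorem exists_orderOf_prime_closedNbhd_eq_univ [Finite G] {a : G} (ha : a ≠ 1)
    (hap : ¬ (orderOf a).Prime) :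
    ∃ u : G, (orderOf u).Prime ∧ closedNbhd (reducedPowerGraph G) u = Set.univ := by
  have hp : (orderOf a).minFac.Prime := Nat.minFac_prime (by rwa [Ne, orderOf_eq_one_iff])
  have hpa := Nat.minFac_dvd (orderOf a)
  have hu := orderOf_pow_orderOf_div (orderOf_pos a).ne' hpa
  have hup : (orderOf (a ^ (orderOf a / (orderOf a).minFac))).Prime := by rwa [hu]
  refine ⟨_, hup, closedNbhd_eq_univ_of_zpowers_lt hR (ne_one_of_orderOf_prime hup)
    (zpowers_lt_zpowers_iff.mpr ⟨npow_mem_zpowers a _, ?_⟩) fun ha2 => ?_⟩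
  · rw [hu]
    exact lt_of_le_of_ne (Nat.le_of_dvd (orderOf_pos a) hpa) fun h => hap (h ▸ hp)
  · rcases (Nat.dvd_prime Nat.prime_two).mp (orderOf_dvd_of_pow_eq_one ha2) with h | h
    · exact ha (orderOf_eq_one_iff.mp h)
    · exact hap (h ▸ Nat.prime_two)

/-- Once `u` is the only element of prime order, every `g ≠ 1` has even order, so
`⟨g²⟩ < ⟨g⟩` and the triangle `1, g², g` forces `g⁴ = 1`. -/
theorem isCommonSquare_of_forall_orderOf_prime [Finite G] {u : G} (hu : orderOf u = 2)
    (huniq : ∀ w : G, (orderOf w).Prime → w = u) : IsCommonSquare u := by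
  have horder2 : ∀ g : G, g ≠ 1 → g ^ 2 = 1 → g = u := fun g hg1 hg2 =>
    huniq g (by rw [orderOf_eq_prime hg2 hg1]; exact Nat.prime_two)
  have heven : ∀ g : G, g ≠ 1 → 2 ∣ orderOf g := fun g hg => by
    have hq : (orderOf g).minFac.Prime := Nat.minFac_prime (by rwa [Ne, orderOf_eq_one_iff])
    have hq' := orderOf_pow_orderOf_div (orderOf_pos g).ne' (Nat.minFac_dvd (orderOf g))
    rw [← hu, ← huniq _ (hq' ▸ hq), hq']
    exact Nat.minFac_dvd _
  have hfour : ∀ g : G, (g ^ 2) ^ 2 = 1 := fun g => by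
    by_contra h4
    have hg2 : g ^ 2 ≠ 1 := fun h => h4 (by rw [h, one_pow])
    have hg1 : g ≠ 1 := by
      rintro rfl
      exact hg2 (one_pow 2)
    have hlt : zpowers (g ^ 2) < zpowers g := zpowers_lt_zpowers_iff.mpr
      ⟨npow_mem_zpowers g 2, by
        rw [orderOf_pow_of_dvd two_ne_zero (heven g hg1)]
        exact Nat.div_lt_self (orderOf_pos g) one_lt_two⟩
    exact h4 (sq_eq_one_of_closedNbhd_eq_univ (closedNbhd_eq_univ_of_zpowers_lt hR hg2 hlt hg2))
  refine ⟨hu, fun g hg1 hgu => horder2 _ (fun hg2 => hgu (horder2 g hg1 hg2)) (hfour g)⟩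

theorem exists_isCommonSquare_of_cliqueFree [Finite G] {a : G} (ha : a ≠ 1)
    (hap : ¬ (orderOf a).Prime) : ∃ u : G, IsCommonSquare u := by
  obtain ⟨u, hup, hu⟩ := exists_orderOf_prime_closedNbhd_eq_univ hR ha hap
  have hu2 : orderOf u = 2 := (Nat.prime_dvd_prime_iff_eq hup Nat.prime_two).mp
    (orderOf_dvd_of_pow_eq_one (sq_eq_one_of_closedNbhd_eq_univ hu))
  exact ⟨u, isCommonSquare_of_forall_orderOf_prime hR hu2 fun w hw =>
    eq_of_closedNbhd_eq_univ_of_orderOf_prime hu hup hw⟩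

end PowerGraph

/-- Corollary 5.7: for a finite group `G` of order `n ≥ 3`, the following are
equivalent: (a) `sdim(𝒫_R(G)) = n - 2`; (b) `ℛ_{𝒫_R(G)}` is a star;
(c) `G ≅ ℤ_4`, `G ≅ Q_8`, or `G` is a `𝒫`-group. -/
theorem sdim_reducedPowerGraph_eq_card_sub_two (G : Type*) [Group G] [Fintype G]
    (h3 : 3 ≤ Fintype.card G) :
    (sdim (reducedPowerGraph G) = Fintype.card G - 2 ↔
      IsStar (reducedGraph (reducedPowerGraph G))) ∧
    (IsStar (reducedGraph (reducedPowerGraph G)) ↔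
      (Nonempty (G ≃* Multiplicative (ZMod 4)) ∨
       Nonempty (G ≃* QuaternionGroup 2) ∨
       ∀ g : G, g ≠ 1 → (orderOf g).Prime)) := by
  have hdiam := ediam_le_two_of_forall_adj fun _ => reducedPowerGraph_adj_one (G := G)
  have hstar := isStar_iff_cliqueFree_three
    (reducedGraph_adj_of_closedNbhd_eq_univ (closedNbhd_reducedPowerGraph_one (G := G)))
  obtain ⟨w, hw⟩ := exists_closedNbhd_reducedPowerGraph_ne_univ h3
  have hedge := reducedGraph_adj_of_closedNbhd_eq_univ closedNbhd_reducedPowerGraph_one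
    (Quotient.mk _ w) fun h => hw ((Quotient.exact h).trans closedNbhd_reducedPowerGraph_one)
  refine ⟨(sdim_eq_card_sub_two_iff hdiam hedge).trans hstar.symm, fun h => ?_, ?_⟩
  · by_cases hP : ∀ g : G, g ≠ 1 → (orderOf g).Prime
    · exact Or.inr (Or.inr hP)
    obtain ⟨a, ha, hap⟩ := not_forall₂.mp hP
    obtain ⟨u, hu⟩ := exists_isCommonSquare_of_cliqueFree (hstar.mp h) ha hap
    have hau : a ≠ u := by
      rintro rfl
      exact hap (hu.1 ▸ Nat.prime_two)
    exact (hu.nonempty_mulEquiv ha hau).imp_right Or.inl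
  · rintro (e | e | hP)
    · exact e.elim fun e => (isCommonSquare_zmod_four.map e.symm).isStar
    · exact e.elim fun e => (isCommonSquare_quaternionGroup_two.map e.symm).isStar
    · exact isStar_of_forall_orderOf_prime hP
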